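/- There exist a ceer R and a computable binary tree T such that: every infinite path of T is the characteristic function of an infinite partial transversal of R; T has at least one infinite path; and no infinite path of T is computable. Consequently the Turing degree of every infinite path of T belongs to Spec⇒(Id, R), the set of infinite paths of T is a special Π⁰₁ class, and the degree 0 does not belong to Spec⇒(Id, R). -/

import Mathlib

/-- `RecursiveIn O f` means the partial function `f` is partial recursive in the
(total) oracle `O`. -/
inductive RecursiveIn' (O : ℕ → ℕ) : (ℕ →. ℕ) → Prop
  | zero : RecursiveIn' O (pure 0)
  | succ : RecursiveIn' O Nat.succ
  | left : RecursiveIn' O ↑fun n : ℕ => n.unpair.1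
  | right : RecursiveIn' O ↑fun n : ℕ => n.unpair.2
  | oracle : RecursiveIn' O ↑O
  | pair {f g} : RecursiveIn' O f → RecursiveIn' O g →
      RecursiveIn' O fun n => Nat.pair <$> f n <*> g n
  | comp {f g} : RecursiveIn' O f → RecursiveIn' O g →
      RecursiveIn' O fun n => g n >>= f
  | prec {f g} : RecursiveIn' O f → RecursiveIn' O g →
      RecursiveIn' O (Nat.unpaired fun a n =>
        n.rec (f a) fun y IH => do let i ← IH; g (Nat.pair a (Nat.pair y i)))
  | rfind {f} : RecursiveIn' O f →
      RecursiveIn' O fun a => Nat.rfind fun n => (fun m => m = 0) <$> f (Nat.pair a n)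

/-- Turing reducibility between total functions on `ℕ`. -/
def TuringReducible' (f g : ℕ → ℕ) : Prop := RecursiveIn' g ↑f

/-- Turing equivalence of total functions on `ℕ`. -/
def TuringEquivalent' (f g : ℕ → ℕ) : Prop := TuringReducible' f g ∧ TuringReducible' g f

theorem TuringReducible'.refl (f : ℕ → ℕ) : TuringReducible' f f := RecursiveIn'.oracle

theorem RecursiveIn'.trans' {f : ℕ →. ℕ} {g h : ℕ → ℕ}
    (hf : RecursiveIn' g f) (hg : TuringReducible' g h) : RecursiveIn' h f := by
  induction hf with
  | zero => exact .zero
  | succ => exact .succ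
  | left => exact .left
  | right => exact .right
  | oracle => exact hg
  | pair _ _ ih₁ ih₂ => exact .pair ih₁ ih₂
  | comp _ _ ih₁ ih₂ => exact .comp ih₁ ih₂
  | prec _ _ ih₁ ih₂ => exact .prec ih₁ ih₂
  | rfind _ ih => exact .rfind ih

theorem TuringReducible'.trans {f g h : ℕ → ℕ}
    (h₁ : TuringReducible' f g) (h₂ : TuringReducible' g h) : TuringReducible' f h :=
  RecursiveIn'.trans' h₁ h₂

/-- The setoid of Turing equivalence. -/
def turingSetoid : Setoid (ℕ → ℕ) :=
  ⟨TuringEquivalent',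
    fun f => ⟨.refl f, .refl f⟩,
    fun ⟨h₁, h₂⟩ => ⟨h₂, h₁⟩,
    fun ⟨a₁, a₂⟩ ⟨b₁, b₂⟩ => ⟨a₁.trans b₁, b₂.trans a₂⟩⟩

/-- Turing degrees. -/
def TuringDegree' : Type := Quotient turingSetoid

/-- The Turing degree of a total function. -/
def TuringDegree'.deg (f : ℕ → ℕ) : TuringDegree' := Quotient.mk turingSetoid f

instance : LE TuringDegree' :=
  ⟨fun d₁ d₂ =>
    Quotient.liftOn₂ d₁ d₂ TuringReducible'
      (fun _ _ _ _ h h' =>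
        propext ⟨fun hr => (h.2.trans hr).trans h'.1, fun hr => (h.1.trans hr).trans h'.2⟩)⟩

instance : LT TuringDegree' := ⟨fun d₁ d₂ => d₁ ≤ d₂ ∧ ¬d₂ ≤ d₁⟩

/-- The least Turing degree. -/
def TuringDegree'.zero : TuringDegree' := TuringDegree'.deg fun _ => 0

/-- A partial function is computable in a Turing degree if it is recursive in some
(equivalently, any) representative of that degree. -/
def TuringDegree'.ComputableIn (d : TuringDegree') (f : ℕ →. ℕ) : Prop :=
  Quotient.liftOn d (fun g => RecursiveIn' g f)
    (fun _ _ h => propext ⟨fun hr => hr.trans' h.1, fun hr => hr.trans' h.2⟩)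

open Classical in
/-- The characteristic function of a set of naturals. -/
noncomputable def charFun (A : Set ℕ) : ℕ → ℕ := fun n => if n ∈ A then 1 else 0

/-- Turing reducibility between sets of naturals. -/
noncomputable def SetTuringReducible (A B : Set ℕ) : Prop :=
  TuringReducible' (charFun A) (charFun B)

/-- The Turing degree of a set of naturals. -/
noncomputable def TuringDegree'.degSet (A : Set ℕ) : TuringDegree' :=
  TuringDegree'.deg (charFun A)

/-- `R` is `d`-computably reducible to `S`. -/
def ReducibleIn (d : TuringDegree') (R S : ℕ → ℕ → Prop) : Prop :=
  ∃ f : ℕ → ℕ, d.ComputableIn ↑f ∧ ∀ x y, R x y ↔ S (f x) (f y)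

/-- The reducibility spectrum of the pair `(R, S)`. -/
def SpecRed (R S : ℕ → ℕ → Prop) : Set TuringDegree' := {d | ReducibleIn d R S}

/-- The bi-reducibility spectrum of the pair `(R, S)`. -/
def SpecBired (R S : ℕ → ℕ → Prop) : Set TuringDegree' :=
  {d | ReducibleIn d R S ∧ ReducibleIn d S R}

/-- The equivalence relation generated by a set `A`: two numbers are equivalent
iff they are equal or both belong to `A`. -/
def genRel (A : Set ℕ) : ℕ → ℕ → Prop := fun x y => x = y ∨ (x ∈ A ∧ y ∈ A)

/-- A ceer: an equivalence relation whose set of pairs is computably enumerable. -/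
def Ceer (R : ℕ → ℕ → Prop) : Prop :=
  Equivalence R ∧ REPred fun p : ℕ × ℕ => R p.1 p.2

/-- A computably enumerable set of naturals. -/
def CePred (A : Set ℕ) : Prop := REPred (· ∈ A)

/-- A partial transversal of `R`: a set any two distinct elements of which are
`R`-inequivalent. -/
def PartialTransversal (R : ℕ → ℕ → Prop) (A : Set ℕ) : Prop :=
  ∀ x ∈ A, ∀ y ∈ A, x ≠ y → ¬R x y

/-- An introreducible set: an infinite set computable from each of its infinite subsets. -/
def Introreducible (B : Set ℕ) : Prop :=
  B.Infinite ∧ ∀ C : Set ℕ, C ⊆ B → C.Infinite → SetTuringReducible B C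


/-!
Post's simple set `A` (for each `e`, enumerate the first `x > 2e` seen to enter the `e`-th c.e.
set) is c.e., meets every infinite c.e. set, and has at most `n` elements below `2n`. Let `R`
collapse `A` to one class. The tree `T` accepts `σ` when no `1` of `σ` is in `A` as enumerated by
stage `|σ|` and `σ` has at least `n` ones below every `2n ≤ |σ|`. Every path of `T` is therefore an
infinite subset of the complement of `A`, and listing it in increasing order is a reduction of
`Id` to `R` computable from the path; the complement of `A` is itself a path. A computable path,
or a computable reduction of `Id` to `R` (an injection meeting `A` at most once), would give an
infinite c.e. set disjoint from `A`.
-/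

namespace RecursiveIn'

variable {O : ℕ → ℕ}

theorem of_eq {f g : ℕ →. ℕ} (hf : RecursiveIn' O f) (H : ∀ n, f n = g n) : RecursiveIn' O g :=
  funext H ▸ hf

theorem of_nat_partrec {f : ℕ →. ℕ} (hf : Nat.Partrec f) : RecursiveIn' O f := by
  induction hf with
  | zero => exact .zero
  | succ => exact .succ
  | left => exact .left
  | right => exact .right
  | pair _ _ ih₁ ih₂ => exact .pair ih₁ ih₂
  | comp _ _ ih₁ ih₂ => exact .comp ih₁ ih₂
  | prec _ _ ih₁ ih₂ => exact .prec ih₁ ih₂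
  | rfind _ ih => exact .rfind ih

theorem of_computable {f : ℕ → ℕ} (hf : Computable f) : RecursiveIn' O f :=
  of_nat_partrec (Partrec.nat_iff.1 hf)

theorem nat_partrec_of_const_zero {f : ℕ →. ℕ} (hf : RecursiveIn' (fun _ => 0) f) :
    Nat.Partrec f := by
  induction hf with
  | zero => exact .zero
  | succ => exact .succ
  | left => exact .left
  | right => exact .right
  | oracle => exact Nat.Partrec.zero
  | pair _ _ ih₁ ih₂ => exact .pair ih₁ ih₂
  | comp _ _ ih₁ ih₂ => exact .comp ih₁ ih₂
  | prec _ _ ih₁ ih₂ => exact .prec ih₁ ih₂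
  | rfind _ ih => exact .rfind ih

theorem comp_total {f g : ℕ → ℕ} (hf : RecursiveIn' O f) (hg : RecursiveIn' O g) :
    RecursiveIn' O ↑(fun n => f (g n)) :=
  (hf.comp hg).of_eq fun _ => Part.bind_some _ _

theorem pair_total {f g : ℕ → ℕ} (hf : RecursiveIn' O f) (hg : RecursiveIn' O g) :
    RecursiveIn' O ↑(fun n => Nat.pair (f n) (g n)) :=
  (hf.pair hg).of_eq fun _ => by simp [Seq.seq]

theorem find {P : ℕ → ℕ → Prop} [DecidableRel P] {χ : ℕ → ℕ → ℕ}
    (hχ : RecursiveIn' O ↑(Nat.unpaired χ)) (hχP : ∀ a n, χ a n = 0 ↔ P a n)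
    (h : ∀ a, ∃ n, P a n) : RecursiveIn' O ↑(fun a => Nat.find (h a)) :=
  hχ.rfind.of_eq fun a => by
    refine (Part.eq_some_iff.2 (Nat.mem_rfind.2 ⟨?_, fun hm => ?_⟩)).trans rfl
    · simpa [hχP] using Nat.find_spec (h a)
    · simpa [hχP] using Nat.find_min (h a) hm

theorem iterate {f : ℕ → ℕ} (hf : RecursiveIn' O f) (a : ℕ) :
    RecursiveIn' O ↑(fun n => f^[n] a) := by
  have hstep : RecursiveIn' O ↑(fun q : ℕ => f q.unpair.2.unpair.2) :=
    hf.comp_total (of_computable (Primrec.snd.comp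
      (Primrec.unpair.comp (Primrec.snd.comp Primrec.unpair))).to_comp)
  refine ((prec (of_computable (Computable.const a)) hstep).comp
    (of_computable (Primrec₂.natPair.comp (Primrec.const 0) Primrec.id).to_comp)).of_eq
    fun n => ?_
  simp only [PFun.coe_val, Part.bind_eq_bind, Part.bind_some, Nat.unpaired, Nat.unpair_pair]
  induction n with
  | zero => rfl
  | succ n ih =>
    rw [id] at ih
    simp [ih, Function.iterate_succ_apply']

end RecursiveIn'

section Enumeration

variable {X : ℕ → Bool} (hX : {n | X n = true}.Infinite)
include hX

theorem exists_add_eq_true_of_infinite (b : ℕ) : ∃ k, X (b + k) = true := by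
  obtain ⟨m, hm, hbm⟩ := Set.Infinite.exists_gt hX b
  exact ⟨m - b, by rwa [Nat.add_sub_cancel' hbm.le]⟩

noncomputable def nextTrue (b : ℕ) : ℕ := b + Nat.find (exists_add_eq_true_of_infinite hX b)

noncomputable def enumTrue (n : ℕ) : ℕ :=
  (fun m => nextTrue hX (m + 1))^[n] (nextTrue hX 0)

theorem le_nextTrue (b : ℕ) : b ≤ nextTrue hX b := Nat.le_add_right _ _

theorem nextTrue_spec (b : ℕ) : X (nextTrue hX b) = true :=
  Nat.find_spec (exists_add_eq_true_of_infinite hX b)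

theorem enumTrue_succ (n : ℕ) : enumTrue hX (n + 1) = nextTrue hX (enumTrue hX n + 1) :=
  Function.iterate_succ_apply' _ _ _

theorem enumTrue_strictMono : StrictMono (enumTrue hX) :=
  strictMono_nat_of_lt_succ fun n => (enumTrue_succ hX n).symm ▸ le_nextTrue hX _

theorem enumTrue_spec (n : ℕ) : X (enumTrue hX n) = true := by
  cases n with
  | zero => exact nextTrue_spec hX 0
  | succ n => exact (enumTrue_succ hX n).symm ▸ nextTrue_spec hX _

theorem recursiveIn'_nextTrue : RecursiveIn' (fun n => (X n).toNat) ↑(nextTrue hX) := by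
  have hadd : Computable fun q : ℕ => q.unpair.1 + q.unpair.2 :=
    (Primrec.nat_add.comp (Primrec.fst.comp Primrec.unpair)
      (Primrec.snd.comp Primrec.unpair)).to_comp
  have hχ : RecursiveIn' (fun n => (X n).toNat)
      ↑(Nat.unpaired fun b k => 1 - (X (b + k)).toNat) :=
    (RecursiveIn'.of_computable (Primrec.nat_sub.comp (Primrec.const 1) Primrec.id).to_comp
      ).comp_total (RecursiveIn'.oracle.comp_total (RecursiveIn'.of_computable hadd))
  have hfind := RecursiveIn'.find hχ (fun b k => by cases X (b + k) <;> simp)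
    (exists_add_eq_true_of_infinite hX)
  refine ((RecursiveIn'.of_computable hadd).comp_total
    ((RecursiveIn'.of_computable Computable.id).pair_total hfind)).of_eq fun b => ?_
  simp [nextTrue]

theorem recursiveIn'_enumTrue : RecursiveIn' (fun n => (X n).toNat) ↑(enumTrue hX) :=
  ((recursiveIn'_nextTrue hX).comp_total
    (RecursiveIn'.of_computable Primrec.succ.to_comp)).iterate _

end Enumeration

theorem REPred.exists_code {p : ℕ → Prop} (hp : REPred p) :
    ∃ c : Nat.Partrec.Code, ∀ x, (c.eval x).Dom ↔ p x := by
  obtain ⟨c, hc⟩ :=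
    Nat.Partrec.Code.exists_code.1 (Partrec.nat_iff.1 (hp.map (Computable.const 0).to₂))
  exact ⟨c, fun x => by simpa [hc] using ⟨fun ⟨h, _⟩ => h, fun h => ⟨h, trivial⟩⟩⟩

theorem ComputablePred.rePred_exists {α : Type*} [Primcodable α] {P : α → ℕ → Prop}
    (hP : ComputablePred fun q : α × ℕ => P q.1 q.2) : REPred fun a => ∃ n, P a n := by
  obtain ⟨_, hd⟩ := hP
  have hsearch : Partrec fun a =>
      Nat.rfind fun n => Part.some (decide ((fun q : α × ℕ => P q.1 q.2) (a, n))) :=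
    Partrec.rfind hd.partrec
  exact hsearch.dom_re.of_eq fun a => Nat.rfind_dom.trans (by simp)

theorem rePred_mem_range {α : Type*} [Primcodable α] [DecidableEq α] {g : ℕ → α}
    (hg : Computable g) : REPred (· ∈ Set.range g) :=
  (ComputablePred.rePred_exists (P := fun a n => g n = a)
    ⟨inferInstance, Primrec.eq.decide.to_comp.comp (hg.comp Computable.snd) Computable.fst⟩).of_eq
    fun _ => Iff.rfl

theorem genRel_equivalence (A : Set ℕ) : Equivalence (genRel A) where
  refl _ := Or.inl rfl
  symm := by
    rintro x y (rfl | ⟨hx, hy⟩)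
    exacts [Or.inl rfl, Or.inr ⟨hy, hx⟩]
  trans := by
    rintro x y z (rfl | ⟨hx, hy⟩) (rfl | ⟨hy', hz⟩)
    exacts [Or.inl rfl, Or.inr ⟨hy', hz⟩, Or.inr ⟨hx, hy⟩, Or.inr ⟨hx, hz⟩]

theorem ceer_genRel_iUnion {As : ℕ → Set ℕ} (hmono : Monotone As)
    (hAs : PrimrecRel fun s x => x ∈ As s) : Ceer (genRel (⋃ s, As s)) := by
  refine ⟨genRel_equivalence _, ?_⟩
  have hstage : PrimrecPred fun q : (ℕ × ℕ) × ℕ =>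
      q.1.1 = q.1.2 ∨ (q.1.1 ∈ As q.2 ∧ q.1.2 ∈ As q.2) :=
    (Primrec.eq.comp (Primrec.fst.comp Primrec.fst) (Primrec.snd.comp Primrec.fst)).or
      ((hAs.comp Primrec.snd (Primrec.fst.comp Primrec.fst)).and
        (hAs.comp Primrec.snd (Primrec.snd.comp Primrec.fst)))
  refine (ComputablePred.rePred_exists
    (P := fun p s => p.1 = p.2 ∨ (p.1 ∈ As s ∧ p.2 ∈ As s)) hstage.computablePred).of_eq fun p => ?_
  simp only [genRel, Set.mem_iUnion]
  constructor
  · rintro ⟨s, h | ⟨hx, hy⟩⟩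
    exacts [Or.inl h, Or.inr ⟨⟨s, hx⟩, ⟨s, hy⟩⟩]
  · rintro (h | ⟨⟨s, hx⟩, ⟨t, hy⟩⟩)
    · exact ⟨0, Or.inl h⟩
    · exact ⟨max s t, Or.inr ⟨hmono (le_max_left s t) hx, hmono (le_max_right s t) hy⟩⟩

section PostSet

open Nat.Partrec (Code)
open Nat.Partrec.Code (evaln evaln_complete evaln_sound primrec_evaln)
open Primrec

/-- `n` codes a stage `n.unpair.1` and an element `n.unpair.2` of the `e`-th c.e. set; only
elements above `2 * e` count, which is what keeps `postSet` sparse. -/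
def PostCandidate (e n : ℕ) : Prop :=
  2 * e < n.unpair.2 ∧ (evaln n.unpair.1 (Denumerable.ofNat Code e) n.unpair.2).isSome

def PostWitness (e n : ℕ) : Prop := PostCandidate e n ∧ ∀ m < n, ¬PostCandidate e m

-- The bound `e < x` loses nothing, since a witness for `e` exceeds `2 * e`.
def postSetAt (s : ℕ) : Set ℕ := {x | ∃ e < x, ∃ n < s, PostWitness e n ∧ n.unpair.2 = x}

def postSet : Set ℕ := ⋃ s, postSetAt s

theorem primrecRel_postCandidate : PrimrecRel PostCandidate :=
  (nat_lt.comp (nat_mul.comp (const 2) fst) (snd.comp (unpair.comp snd))).and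
    (Primrec.eq.comp (option_isSome.comp (primrec_evaln.comp
      (((fst.comp (unpair.comp snd)).pair ((Primrec.ofNat Code).comp fst)).pair
        (snd.comp (unpair.comp snd))))) (const true))

theorem primrecRel_postWitness : PrimrecRel PostWitness :=
  primrecRel_postCandidate.and
    ((PrimrecRel.forall_lt (R := fun m e => ¬PostCandidate e m)
      (primrecRel_postCandidate.not.comp snd fst)).comp snd fst)

theorem primrecRel_mem_postSetAt : PrimrecRel fun s x => x ∈ postSetAt s := by
  have hstage : PrimrecRel fun (L : List ℕ) (q : ℕ × ℕ) =>
      ∃ n ∈ L, PostWitness q.1 n ∧ n.unpair.2 = q.2 :=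
    PrimrecRel.exists_mem_list ((primrecRel_postWitness.comp (fst.comp snd) fst).and
      (Primrec.eq.comp (snd.comp (unpair.comp fst)) (snd.comp snd)))
  have hpost : PrimrecRel fun (L : List ℕ) (p : ℕ × ℕ) =>
      ∃ e ∈ L, ∃ n ∈ List.range p.1, PostWitness e n ∧ n.unpair.2 = p.2 :=
    PrimrecRel.exists_mem_list
      (hstage.comp (list_range.comp (fst.comp snd)) (fst.pair (snd.comp snd)))
  exact (hpost.comp (list_range.comp snd) Primrec.id).of_eq fun _ => by
    simp [postSetAt]

theorem PostWitness.eq {e m n : ℕ} (hm : PostWitness e m) (hn : PostWitness e n) : m = n :=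
  le_antisymm (not_lt.1 fun h => hm.2 n h hn.1) (not_lt.1 fun h => hn.2 m h hm.1)

theorem mem_postSet_iff {x : ℕ} : x ∈ postSet ↔ ∃ e n, PostWitness e n ∧ n.unpair.2 = x := by
  constructor
  · rintro ⟨-, ⟨s, rfl⟩, e, -, n, -, hw⟩
    exact ⟨e, n, hw⟩
  · rintro ⟨e, n, hw, rfl⟩
    have : 2 * e < n.unpair.2 := hw.1.1
    exact Set.mem_iUnion.2 ⟨n + 1, e, by omega, n, n.lt_succ_self, hw, rfl⟩

theorem postSetAt_mono : Monotone postSetAt :=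
  fun _ _ hst _ ⟨e, he, n, hn, hw⟩ => ⟨e, he, n, hn.trans_le hst, hw⟩

open Classical in
theorem count_postSet_le (n : ℕ) : Nat.count (· ∈ postSet) (2 * n) ≤ n := by
  rw [Nat.count_eq_card_filter_range, ← Finset.card_range n]
  refine Finset.card_le_card_of_forall_subsingleton
    (fun x e => ∃ m, PostWitness e m ∧ m.unpair.2 = x) (fun x hx => ?_) fun e _ => ?_
  · obtain ⟨hx, hA⟩ := Finset.mem_filter.1 hx
    obtain ⟨e, m, hw, rfl⟩ := mem_postSet_iff.1 hA
    have : 2 * e < m.unpair.2 := hw.1.1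
    exact ⟨e, Finset.mem_range.2 (by simp at hx; omega), m, hw, rfl⟩
  · rintro x ⟨-, m, hm, rfl⟩ y ⟨-, m', hm', rfl⟩
    rw [hm.eq hm']

theorem exists_mem_postSet_of_rePred {W : Set ℕ} (hW : REPred (· ∈ W)) (hinf : W.Infinite) :
    ∃ x ∈ W, x ∈ postSet := by
  classical
  obtain ⟨c, hc⟩ := hW.exists_code
  set e := Encodable.encode c
  obtain ⟨x, hxW, hex⟩ := hinf.exists_gt (2 * e)
  obtain ⟨v, hv⟩ := Part.dom_iff_mem.1 ((hc x).2 hxW)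
  obtain ⟨k, hk⟩ := evaln_complete.1 hv
  have hcand : ∃ n, PostCandidate e n :=
    ⟨Nat.pair k x, by simpa [PostCandidate, e, hex] using Option.isSome_iff_exists.2 ⟨v, hk⟩⟩
  have hw : PostWitness e (Nat.find hcand) :=
    ⟨Nat.find_spec hcand, fun m hm => Nat.find_min hcand hm⟩
  obtain ⟨w, hw'⟩ := Option.isSome_iff_exists.1 hw.1.2
  refine ⟨_, (hc _).1 (Part.dom_iff_mem.2 ⟨w, ?_⟩), mem_postSet_iff.2 ⟨e, _, hw, rfl⟩⟩
  simpa [e] using evaln_sound hw'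

end PostSet

theorem eq_iff_genRel_of_injective {A : Set ℕ} {f : ℕ → ℕ} (hf : Function.Injective f)
    (hA : ∀ x, f x ∉ A) (x y : ℕ) : x = y ↔ genRel A (f x) (f y) :=
  ⟨fun h => Or.inl (congrArg f h), fun h => h.elim (fun h => hf h) fun h => (hA x h.1).elim⟩

theorem zero_not_mem_specRed_genRel {A : Set ℕ}
    (hA : ∀ W : Set ℕ, REPred (· ∈ W) → W.Infinite → ∃ x ∈ W, x ∈ A) :
    TuringDegree'.zero ∉ SpecRed (fun x y => x = y) (genRel A) := by
  rintro ⟨f, hf, hred⟩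
  have hcomp : Computable f := Partrec.nat_iff.2 (RecursiveIn'.nat_partrec_of_const_zero hf)
  have hinj : Function.Injective f := fun x y h => (hred x y).2 (Or.inl h)
  obtain ⟨x₀, hx₀⟩ : ∃ x₀, ∀ x ≠ x₀, f x ∉ A := by
    by_cases h : ∃ x₀, f x₀ ∈ A
    · obtain ⟨x₀, hx₀⟩ := h
      exact ⟨x₀, fun x hx hxA => hx ((hred x x₀).2 (Or.inr ⟨hxA, hx₀⟩))⟩
    · exact ⟨0, fun x _ hxA => h ⟨x, hxA⟩⟩
  obtain ⟨-, ⟨n, rfl⟩, hA'⟩ :=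
    hA _ (rePred_mem_range (hcomp.comp (Primrec.nat_add.comp (Primrec.const _) Primrec.id).to_comp))
      (Set.infinite_range_of_injective (hinj.comp (add_right_injective (x₀ + 1))))
  exact hx₀ _ (by omega) hA'

section DensityTree

def densityTree (As : ℕ → Set ℕ) : Set (List Bool) :=
  {σ | (∀ i < σ.length, σ.getD i false = true → i ∉ As σ.length) ∧
    ∀ n, 2 * n ≤ σ.length → n ≤ Nat.count (fun i => σ.getD i false = true) (2 * n)}

def IsPath (T : Set (List Bool)) (X : ℕ → Bool) : Prop := ∀ k, (List.range k).map X ∈ T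

variable {As : ℕ → Set ℕ}

open Primrec in
theorem computablePred_mem_densityTree (hAs : PrimrecRel fun s x => x ∈ As s) :
    ComputablePred (· ∈ densityTree As) := by
  have hget : PrimrecRel fun (i : ℕ) (σ : List Bool) => σ.getD i false = true :=
    Primrec.eq.comp ((list_getD false).comp snd fst) (const true)
  have hcount : Primrec₂ fun (σ : List Bool) (m : ℕ) =>
      Nat.count (fun i => σ.getD i false = true) m :=
    (list_length.comp (hget.listFilter.comp (list_range.comp snd) fst)).of_eq fun _ => by
      simp [Nat.count, List.countP_eq_length_filter]
  have hclean : PrimrecRel fun (i : ℕ) (σ : List Bool) =>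
      ¬σ.getD i false = true ∨ i ∉ As σ.length :=
    hget.not.or (hAs.comp (list_length.comp snd) fst).not
  have hdense : PrimrecRel fun (n : ℕ) (σ : List Bool) =>
      ¬2 * n ≤ σ.length ∨ n ≤ Nat.count (fun i => σ.getD i false = true) (2 * n) :=
    (nat_le.comp (nat_mul.comp (const 2) fst) (list_length.comp snd)).not.or
      (nat_le.comp fst (hcount.comp snd (nat_mul.comp (const 2) fst)))
  refine ((hclean.forall_mem_list.comp (list_range.comp list_length) Primrec.id).and
    (hdense.forall_mem_list.comp (list_range.comp (succ.comp list_length)) Primrec.id)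
    ).computablePred.of_eq fun σ => ?_
  simp only [List.mem_range, Nat.lt_succ_iff, densityTree, Set.mem_ofPred_eq, id,
    ← imp_iff_not_or]
  exact and_congr_right fun _ => ⟨fun h n hn => h n (by omega) hn, fun h n _ => h n⟩

theorem densityTree_prefix_closed (hmono : Monotone As) :
    ∀ σ ∈ densityTree As, ∀ τ : List Bool, τ <+: σ → τ ∈ densityTree As := by
  rintro _ ⟨hσA, hσcount⟩ τ ⟨ρ, rfl⟩
  have hlen : τ.length ≤ (τ ++ ρ).length := by simp
  have hget : ∀ i < τ.length, (τ ++ ρ).getD i false = τ.getD i false :=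
    fun i hi => List.getD_append _ _ _ _ hi
  refine ⟨fun i hi hτi hiA => hσA i (hi.trans_le hlen) ((hget i hi).trans hτi) (hmono hlen hiA),
    fun n hn => (hσcount n (hn.trans hlen)).trans (Nat.count_mono_left fun i hi h => ?_)⟩
  rwa [← hget i (by omega)]

theorem getD_map_range {X : ℕ → Bool} {i k : ℕ} (h : i < k) :
    ((List.range k).map X).getD i false = X i := by
  simp [h]

variable {X : ℕ → Bool}

theorem IsPath.not_mem_iUnion (hmono : Monotone As) (hX : IsPath (densityTree As) X) {i : ℕ}
    (hi : X i = true) : i ∉ ⋃ s, As s := by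
  rintro ⟨-, ⟨s, rfl⟩, hs⟩
  have hk : i < max (i + 1) s := by omega
  refine (hX (max (i + 1) s)).1 i (by simp) (by rwa [getD_map_range hk]) ?_
  simpa using hmono (le_max_right _ _) hs

theorem IsPath.le_count (hX : IsPath (densityTree As) X) (n : ℕ) :
    n ≤ Nat.count (X · = true) (2 * n) :=
  ((hX (2 * n)).2 n (by simp)).trans (Nat.count_mono_left fun i hi h => by
    rwa [getD_map_range hi] at h)

theorem IsPath.infinite (hX : IsPath (densityTree As) X) : {n | X n = true}.Infinite := by
  intro hfin
  have := (hX.le_count _).trans (Nat.count_le_card hfin (2 * (hfin.toFinset.card + 1)))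
  omega

theorem isPath_densityTree_compl [DecidablePred (· ∈ ⋃ s, As s)]
    (hdens : ∀ n, Nat.count (· ∈ ⋃ s, As s) (2 * n) ≤ n) :
    IsPath (densityTree As) fun n => decide (n ∉ ⋃ s, As s) := by
  intro k
  refine ⟨fun i hi hXi hiA => ?_, fun n hn => ?_⟩
  · rw [getD_map_range (by simpa using hi), decide_eq_true_iff] at hXi
    exact hXi (Set.mem_iUnion.2 ⟨_, hiA⟩)
  · have hsplit := Finset.card_filter_add_card_filter_not (s := Finset.range (2 * n))
      (p := (· ∈ ⋃ s, As s))
    have hcompl : n ≤ Nat.count (· ∉ ⋃ s, As s) (2 * n) := by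
      have := hdens n
      rw [Nat.count_eq_card_filter_range] at this ⊢
      simp only [Finset.card_range] at hsplit
      omega
    refine hcompl.trans (Nat.count_mono_left fun i hi h => ?_)
    rw [getD_map_range (by simp at hn; omega)]
    simpa using h

theorem IsPath.partialTransversal (hmono : Monotone As) (hX : IsPath (densityTree As) X) :
    PartialTransversal (genRel (⋃ s, As s)) {n | X n = true} :=
  fun _ hx _ _ hxy hR => hR.elim hxy fun h => hX.not_mem_iUnion hmono hx h.1

theorem IsPath.not_computable (hmono : Monotone As)
    (hA : ∀ W : Set ℕ, REPred (· ∈ W) → W.Infinite → ∃ x ∈ W, x ∈ ⋃ s, As s)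
    (hX : IsPath (densityTree As) X) : ¬Computable X := fun hc => by
  obtain ⟨x, hxX, hxA⟩ :=
    hA {n | X n = true} (ComputablePred.to_re ⟨inferInstance, by simpa using hc⟩) hX.infinite
  exact hX.not_mem_iUnion hmono hxX hxA

theorem IsPath.deg_mem_specRed (hmono : Monotone As) (hX : IsPath (densityTree As) X) :
    TuringDegree'.deg (fun n => (X n).toNat) ∈ SpecRed (fun x y => x = y) (genRel (⋃ s, As s)) :=
  ⟨enumTrue hX.infinite, recursiveIn'_enumTrue hX.infinite,
    eq_iff_genRel_of_injective (enumTrue_strictMono _).injective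
      fun n => hX.not_mem_iUnion hmono (enumTrue_spec _ n)⟩

end DensityTree

/-- There are a ceer `R` and a computable binary tree `T` whose
infinite paths are characteristic functions of infinite partial transversals of
`R`, such that `T` has a path but no computable one; consequently every degree
of a path of `T` lies in `Spec⇒(Id, R)`, `[T]` is a special `Π⁰₁` class, and
`0 ∉ Spec⇒(Id, R)`. -/
theorem stmt_13 :
    ∃ R : ℕ → ℕ → Prop, Ceer R ∧
      ∃ T : Set (List Bool), ComputablePred (· ∈ T) ∧
        (∀ σ ∈ T, ∀ τ : List Bool, τ <+: σ → τ ∈ T) ∧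
        (∀ X : ℕ → Bool, (∀ k, (List.range k).map X ∈ T) →
          {n | X n = true}.Infinite ∧ PartialTransversal R {n | X n = true}) ∧
        (∃ X : ℕ → Bool, ∀ k, (List.range k).map X ∈ T) ∧
        (∀ X : ℕ → Bool, (∀ k, (List.range k).map X ∈ T) → ¬Computable X) ∧
        (∀ X : ℕ → Bool, (∀ k, (List.range k).map X ∈ T) →
          TuringDegree'.deg (fun n => (X n).toNat) ∈ SpecRed (fun x y => x = y) R) ∧
        TuringDegree'.zero ∉ SpecRed (fun x y => x = y) R := by
  classical
  exact ⟨genRel postSet, ceer_genRel_iUnion postSetAt_mono primrecRel_mem_postSetAt,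
    densityTree postSetAt, computablePred_mem_densityTree primrecRel_mem_postSetAt,
    densityTree_prefix_closed postSetAt_mono,
    fun _ hX => ⟨IsPath.infinite hX, IsPath.partialTransversal postSetAt_mono hX⟩,
    ⟨_, isPath_densityTree_compl count_postSet_le⟩,
    fun _ => IsPath.not_computable postSetAt_mono fun _ => exists_mem_postSet_of_rePred,
    fun _ => IsPath.deg_mem_specRed postSetAt_mono,
    zero_not_mem_specRed_genRel fun _ => exists_mem_postSet_of_rePred⟩
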